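/- Let p > 0, h > 0, x₀ ∈ ℝ and i ∈ ℤ, with knots x_j = x₀ + jh, and set s = sinh(ph), c = cosh(ph). The second derivative φ_i″ of the exponential B-spline takes the following values at the knots: φ_i″(x_{i−2}) = 0, φ_i″(x_{i−1}) = p²s/(2(phc−s)), φ_i″(x_i) = −p²s/(phc−s), φ_i″(x_{i+1}) = p²s/(2(phc−s)), φ_i″(x_{i+2}) = 0. -/
import Mathlib


/-- The exponential B-spline `φ_i` with parameter `p`, mesh size `h` and knots
`x_j = x₀ + j·h`, defined piecewise on `[x_{i−2}, x_{i+2}]` and zero elsewhere. -/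
noncomputable def expBspline (p h x₀ : ℝ) (i : ℤ) : ℝ → ℝ := fun x =>
  let s := Real.sinh (p * h)
  let c := Real.cosh (p * h)
  let a₁ := p * h * c / (p * h * c - s)
  let b₁ := p / 2 * ((c * (c - 1) + s ^ 2) / ((p * h * c - s) * (1 - c)))
  let b₂ := p / (2 * (p * h * c - s))
  let c₁ := 1 / 4 * ((Real.exp (-(p * h)) * (1 - c) + s * (Real.exp (-(p * h)) - 1)) /
      ((p * h * c - s) * (1 - c)))
  let d₁ := 1 / 4 * ((Real.exp (p * h) * (c - 1) + s * (Real.exp (p * h) - 1)) /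
      ((p * h * c - s) * (1 - c)))
  let X : ℤ → ℝ := fun j => x₀ + (j : ℝ) * h
  if X (i - 2) ≤ x ∧ x ≤ X (i - 1) then
    b₂ * ((X (i - 2) - x) - Real.sinh (p * (X (i - 2) - x)) / p)
  else if X (i - 1) ≤ x ∧ x ≤ X i then
    a₁ + b₁ * (X i - x) + c₁ * Real.exp (p * (X i - x)) + d₁ * Real.exp (-(p * (X i - x)))
  else if X i ≤ x ∧ x ≤ X (i + 1) then
    a₁ + b₁ * (x - X i) + c₁ * Real.exp (p * (x - X i)) + d₁ * Real.exp (-(p * (x - X i)))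
  else if X (i + 1) ≤ x ∧ x ≤ X (i + 2) then
    b₂ * ((x - X (i + 2)) - Real.sinh (p * (x - X (i + 2))) / p)
  else 0

namespace EBaux
open Real Set Filter

noncomputable def cA (p h : ℝ) : ℝ :=
  p * h * Real.cosh (p * h) / (p * h * Real.cosh (p * h) - Real.sinh (p * h))
noncomputable def cB1 (p h : ℝ) : ℝ :=
  p / 2 * ((Real.cosh (p * h) * (Real.cosh (p * h) - 1) + Real.sinh (p * h) ^ 2) /
    ((p * h * Real.cosh (p * h) - Real.sinh (p * h)) * (1 - Real.cosh (p * h))))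
noncomputable def cB2 (p h : ℝ) : ℝ :=
  p / (2 * (p * h * Real.cosh (p * h) - Real.sinh (p * h)))
noncomputable def cC1 (p h : ℝ) : ℝ :=
  1 / 4 * ((Real.exp (-(p * h)) * (1 - Real.cosh (p * h)) +
      Real.sinh (p * h) * (Real.exp (-(p * h)) - 1)) /
    ((p * h * Real.cosh (p * h) - Real.sinh (p * h)) * (1 - Real.cosh (p * h))))
noncomputable def cD1 (p h : ℝ) : ℝ :=
  1 / 4 * ((Real.exp (p * h) * (Real.cosh (p * h) - 1) +
      Real.sinh (p * h) * (Real.exp (p * h) - 1)) /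
    ((p * h * Real.cosh (p * h) - Real.sinh (p * h)) * (1 - Real.cosh (p * h))))

noncomputable def P1 (p h A x : ℝ) : ℝ :=
  cB2 p h * ((A - x) - Real.sinh (p * (A - x)) / p)
noncomputable def P2 (p h B x : ℝ) : ℝ :=
  cA p h + cB1 p h * (B - x) + cC1 p h * Real.exp (p * (B - x)) +
    cD1 p h * Real.exp (-(p * (B - x)))
noncomputable def P3 (p h B x : ℝ) : ℝ :=
  cA p h + cB1 p h * (x - B) + cC1 p h * Real.exp (p * (x - B)) +
    cD1 p h * Real.exp (-(p * (x - B)))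
noncomputable def P4 (p h D x : ℝ) : ℝ :=
  cB2 p h * ((x - D) - Real.sinh (p * (x - D)) / p)

noncomputable def P1' (p h A x : ℝ) : ℝ := cB2 p h * (Real.cosh (p * (A - x)) - 1)
noncomputable def P2' (p h B x : ℝ) : ℝ :=
  -cB1 p h - p * cC1 p h * Real.exp (p * (B - x)) + p * cD1 p h * Real.exp (-(p * (B - x)))
noncomputable def P3' (p h B x : ℝ) : ℝ :=
  cB1 p h + p * cC1 p h * Real.exp (p * (x - B)) - p * cD1 p h * Real.exp (-(p * (x - B)))
noncomputable def P4' (p h D x : ℝ) : ℝ := cB2 p h * (1 - Real.cosh (p * (x - D)))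

lemma congr_d {f : ℝ → ℝ} {v v' x : ℝ} (hd : HasDerivAt f v x) (e : v = v') :
    HasDerivAt f v' x := e ▸ hd

lemma hd_lin_left (p A : ℝ) (x : ℝ) : HasDerivAt (fun y => p * (A - y)) (-p) x := by
  have := ((hasDerivAt_id x).const_sub A).const_mul p
  simpa using this

lemma hd_lin_right (p B : ℝ) (x : ℝ) : HasDerivAt (fun y => p * (y - B)) p x := by
  have := ((hasDerivAt_id x).sub_const B).const_mul p
  simpa using this

lemma hasDerivAt_P1 (p h A x : ℝ) (hp : p ≠ 0) :
    HasDerivAt (fun y => P1 p h A y) (P1' p h A x) x := by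
  have h1 : HasDerivAt (fun y : ℝ => (A - y) - Real.sinh (p * (A - y)) / p)
      (-1 - Real.cosh (p * (A - x)) * (-p) / p) x :=
    ((hasDerivAt_id x).const_sub A).sub (((hd_lin_left p A x).sinh).div_const p)
  have := h1.const_mul (cB2 p h)
  refine congr_d this ?_
  unfold P1'
  field_simp
  ring

lemma hasDerivAt_P1' (p h A x : ℝ) :
    HasDerivAt (fun y => P1' p h A y) (-(p * cB2 p h * Real.sinh (p * (A - x)))) x := by
  have h1 : HasDerivAt (fun y : ℝ => Real.cosh (p * (A - y)) - 1)
      (Real.sinh (p * (A - x)) * (-p)) x := ((hd_lin_left p A x).cosh).sub_const 1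
  have := h1.const_mul (cB2 p h)
  refine congr_d this ?_
  ring

lemma hasDerivAt_P2 (p h B x : ℝ) :
    HasDerivAt (fun y => P2 p h B y) (P2' p h B x) x := by
  have e1 : HasDerivAt (fun y : ℝ => Real.exp (p * (B - y)))
      (Real.exp (p * (B - x)) * (-p)) x := (hd_lin_left p B x).exp
  have e2 : HasDerivAt (fun y : ℝ => Real.exp (-(p * (B - y))))
      (Real.exp (-(p * (B - x))) * (- -p)) x := ((hd_lin_left p B x).neg).exp
  have h1 : HasDerivAt (fun y => P2 p h B y)
      (0 + cB1 p h * (-1) + cC1 p h * (Real.exp (p * (B - x)) * (-p)) +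
        cD1 p h * (Real.exp (-(p * (B - x))) * (- -p))) x := by
    exact (((hasDerivAt_const x (cA p h)).add
      (((hasDerivAt_id x).const_sub B).const_mul (cB1 p h))).add
      (e1.const_mul (cC1 p h))).add (e2.const_mul (cD1 p h))
  refine congr_d h1 ?_
  unfold P2'
  ring

lemma hasDerivAt_P2' (p h B x : ℝ) :
    HasDerivAt (fun y => P2' p h B y)
      (p ^ 2 * cC1 p h * Real.exp (p * (B - x)) +
        p ^ 2 * cD1 p h * Real.exp (-(p * (B - x)))) x := by
  have e1 : HasDerivAt (fun y : ℝ => Real.exp (p * (B - y)))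
      (Real.exp (p * (B - x)) * (-p)) x := (hd_lin_left p B x).exp
  have e2 : HasDerivAt (fun y : ℝ => Real.exp (-(p * (B - y))))
      (Real.exp (-(p * (B - x))) * (- -p)) x := ((hd_lin_left p B x).neg).exp
  have h1 : HasDerivAt (fun y => P2' p h B y)
      (0 - p * cC1 p h * (Real.exp (p * (B - x)) * (-p)) +
        p * cD1 p h * (Real.exp (-(p * (B - x))) * (- -p))) x := by
    have hc : HasDerivAt (fun _ : ℝ => -cB1 p h) 0 x := hasDerivAt_const x _
    exact (hc.sub (e1.const_mul (p * cC1 p h))).add (e2.const_mul (p * cD1 p h))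
  refine congr_d h1 ?_
  ring

lemma hasDerivAt_P3 (p h B x : ℝ) :
    HasDerivAt (fun y => P3 p h B y) (P3' p h B x) x := by
  have e1 : HasDerivAt (fun y : ℝ => Real.exp (p * (y - B)))
      (Real.exp (p * (x - B)) * p) x := (hd_lin_right p B x).exp
  have e2 : HasDerivAt (fun y : ℝ => Real.exp (-(p * (y - B))))
      (Real.exp (-(p * (x - B))) * -p) x := ((hd_lin_right p B x).neg).exp
  have h1 : HasDerivAt (fun y => P3 p h B y)
      (0 + cB1 p h * 1 + cC1 p h * (Real.exp (p * (x - B)) * p) +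
        cD1 p h * (Real.exp (-(p * (x - B))) * -p)) x := by
    exact (((hasDerivAt_const x (cA p h)).add
      (((hasDerivAt_id x).sub_const B).const_mul (cB1 p h))).add
      (e1.const_mul (cC1 p h))).add (e2.const_mul (cD1 p h))
  refine congr_d h1 ?_
  unfold P3'
  ring

lemma hasDerivAt_P3' (p h B x : ℝ) :
    HasDerivAt (fun y => P3' p h B y)
      (p ^ 2 * cC1 p h * Real.exp (p * (x - B)) +
        p ^ 2 * cD1 p h * Real.exp (-(p * (x - B)))) x := by
  have e1 : HasDerivAt (fun y : ℝ => Real.exp (p * (y - B)))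
      (Real.exp (p * (x - B)) * p) x := (hd_lin_right p B x).exp
  have e2 : HasDerivAt (fun y : ℝ => Real.exp (-(p * (y - B))))
      (Real.exp (-(p * (x - B))) * -p) x := ((hd_lin_right p B x).neg).exp
  have h1 : HasDerivAt (fun y => P3' p h B y)
      (0 + p * cC1 p h * (Real.exp (p * (x - B)) * p) -
        p * cD1 p h * (Real.exp (-(p * (x - B))) * -p)) x := by
    have hc : HasDerivAt (fun _ : ℝ => cB1 p h) 0 x := hasDerivAt_const x _
    exact (hc.add (e1.const_mul (p * cC1 p h))).sub (e2.const_mul (p * cD1 p h))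
  refine congr_d h1 ?_
  ring

lemma hasDerivAt_P4 (p h D x : ℝ) (hp : p ≠ 0) :
    HasDerivAt (fun y => P4 p h D y) (P4' p h D x) x := by
  have h1 : HasDerivAt (fun y : ℝ => (y - D) - Real.sinh (p * (y - D)) / p)
      (1 - Real.cosh (p * (x - D)) * p / p) x :=
    ((hasDerivAt_id x).sub_const D).sub (((hd_lin_right p D x).sinh).div_const p)
  have := h1.const_mul (cB2 p h)
  refine congr_d this ?_
  unfold P4'
  field_simp

lemma hasDerivAt_P4' (p h D x : ℝ) :
    HasDerivAt (fun y => P4' p h D y) (-(p * cB2 p h * Real.sinh (p * (x - D)))) x := by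
  have h1 : HasDerivAt (fun y : ℝ => 1 - Real.cosh (p * (y - D)))
      (-(Real.sinh (p * (x - D)) * p)) x := ((hd_lin_right p D x).cosh).const_sub 1
  have := h1.const_mul (cB2 p h)
  refine congr_d this ?_
  ring


section Identities
variable {p h : ℝ}

lemma sinh_lt_mul_cosh' {t : ℝ} (ht : 0 < t) : Real.sinh t < t * Real.cosh t := by
  have H : StrictMonoOn (fun u : ℝ => u * Real.cosh u - Real.sinh u) (Set.Ici 0) := by
    apply strictMonoOn_of_deriv_pos (convex_Ici 0)
    · fun_prop
    · intro x hx
      rw [interior_Ici] at hx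
      have hd : HasDerivAt (fun u : ℝ => u * Real.cosh u - Real.sinh u)
          ((1 * Real.cosh x + x * Real.sinh x) - Real.cosh x) x :=
        ((hasDerivAt_id x).mul (Real.hasDerivAt_cosh x)).sub (Real.hasDerivAt_sinh x)
      rw [hd.deriv]
      have := mul_pos hx (Real.sinh_pos_iff.mpr hx)
      linarith
  have := H Set.self_mem_Ici (le_of_lt ht) ht
  simp only [Real.cosh_zero, Real.sinh_zero, mul_one, zero_mul, sub_zero] at this
  linarith

lemma q_pos (hp : 0 < p) (hh : 0 < h) : 0 < p * h * Real.cosh (p * h) - Real.sinh (p * h) := by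
  have := sinh_lt_mul_cosh' (mul_pos hp hh)
  linarith

lemma q_ne (hp : 0 < p) (hh : 0 < h) : p * h * Real.cosh (p * h) - Real.sinh (p * h) ≠ 0 := ne_of_gt (q_pos hp hh)

lemma one_sub_cosh_ne (hp : 0 < p) (hh : 0 < h) : 1 - Real.cosh (p * h) ≠ 0 := by
  have : 1 < Real.cosh (p * h) := Real.one_lt_cosh.mpr (ne_of_gt (mul_pos hp hh))
  linarith

/-- C⁰ matching at the inner-left knot. -/
lemma id_val1 (hp : 0 < p) (hh : 0 < h) {A B x : ℝ} (hA : A - x = -h) (hB : B - x = h) :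
    P1 p h A x = P2 p h B x := by
  have hq := q_ne hp hh
  have h1c := one_sub_cosh_ne hp hh
  simp only [P1, P2, cA, cB1, cB2, cC1, cD1, hA, hB]
  rw [show p * -h = -(p*h) by ring, Real.sinh_neg]
  field_simp
  rw [Real.sinh_eq, Real.cosh_eq, Real.exp_neg]
  have hE := Real.exp_ne_zero (p*h)
  field_simp
  ring

/-- C¹ matching at the inner-left knot. -/
lemma id_der1 (hp : 0 < p) (hh : 0 < h) {A B x : ℝ} (hA : A - x = -h) (hB : B - x = h) :
    P2' p h B x = P1' p h A x := by
  have hq := q_ne hp hh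
  have h1c := one_sub_cosh_ne hp hh
  simp only [P1', P2', cA, cB1, cB2, cC1, cD1, hA, hB]
  rw [show p * -h = -(p*h) by ring, Real.cosh_neg]
  field_simp
  rw [Real.sinh_eq, Real.cosh_eq, Real.exp_neg]
  have hE := Real.exp_ne_zero (p*h)
  field_simp
  ring

/-- C¹ matching at the center knot. -/
lemma id_der2 (hp : 0 < p) (hh : 0 < h) {B : ℝ} : P2' p h B B = P3' p h B B := by
  have hq := q_ne hp hh
  have h1c := one_sub_cosh_ne hp hh
  simp only [P2', P3', cB1, cC1, cD1, sub_self, mul_zero, neg_zero, Real.exp_zero, mul_one]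
  field_simp
  rw [Real.sinh_eq, Real.cosh_eq, Real.exp_neg]
  have hE := Real.exp_ne_zero (p*h)
  field_simp
  ring

/-- C⁰ matching at the inner-right knot. -/
lemma id_val3 (hp : 0 < p) (hh : 0 < h) {B D x : ℝ} (hB : x - B = h) (hD : x - D = -h) :
    P3 p h B x = P4 p h D x := by
  have hq := q_ne hp hh
  have h1c := one_sub_cosh_ne hp hh
  simp only [P3, P4, cA, cB1, cB2, cC1, cD1, hB, hD]
  rw [show p * -h = -(p*h) by ring, Real.sinh_neg]
  field_simp
  rw [Real.sinh_eq, Real.cosh_eq, Real.exp_neg]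
  have hE := Real.exp_ne_zero (p*h)
  field_simp
  ring

/-- C¹ matching at the inner-right knot. -/
lemma id_der3 (hp : 0 < p) (hh : 0 < h) {B D x : ℝ} (hB : x - B = h) (hD : x - D = -h) :
    P3' p h B x = P4' p h D x := by
  have hq := q_ne hp hh
  have h1c := one_sub_cosh_ne hp hh
  simp only [P3', P4', cB1, cB2, cC1, cD1, hB, hD]
  rw [show p * -h = -(p*h) by ring, Real.cosh_neg]
  field_simp
  rw [Real.sinh_eq, Real.cosh_eq, Real.exp_neg]
  have hE := Real.exp_ne_zero (p*h)
  field_simp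
  ring

/-- second-derivative value of the sinh pieces at distance h. -/
lemma id_sd_sinh (hp : 0 < p) (hh : 0 < h) {u : ℝ} (hu : u = -h) :
    -(p * cB2 p h * Real.sinh (p * u)) =
      p ^ 2 * Real.sinh (p * h) / (2 * (p * h * Real.cosh (p * h) - Real.sinh (p * h))) := by
  have hq := q_ne hp hh
  simp only [cB2, hu]
  rw [show p * -h = -(p*h) by ring, Real.sinh_neg]
  field_simp

/-- second-derivative value of the exponential piece at distance h. -/
lemma id_sd_exp1 (hp : 0 < p) (hh : 0 < h) {u : ℝ} (hu : u = h) :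
    p ^ 2 * cC1 p h * Real.exp (p * u) + p ^ 2 * cD1 p h * Real.exp (-(p * u)) =
      p ^ 2 * Real.sinh (p * h) / (2 * (p * h * Real.cosh (p * h) - Real.sinh (p * h))) := by
  have hq := q_ne hp hh
  have h1c := one_sub_cosh_ne hp hh
  simp only [cC1, cD1, hu]
  field_simp
  rw [Real.sinh_eq, Real.cosh_eq, Real.exp_neg]
  have hE := Real.exp_ne_zero (p*h)
  field_simp
  ring

/-- second-derivative value of the exponential piece at the center knot. -/
lemma id_sd_exp0 (hp : 0 < p) (hh : 0 < h) {u : ℝ} (hu : u = 0) :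
    p ^ 2 * cC1 p h * Real.exp (p * u) + p ^ 2 * cD1 p h * Real.exp (-(p * u)) =
      -(p ^ 2 * Real.sinh (p * h)) / (p * h * Real.cosh (p * h) - Real.sinh (p * h)) := by
  have hq := q_ne hp hh
  have h1c := one_sub_cosh_ne hp hh
  simp only [cC1, cD1, hu, mul_zero, neg_zero, Real.exp_zero]
  field_simp
  rw [Real.sinh_eq, Real.cosh_eq, Real.exp_neg]
  have hE := Real.exp_ne_zero (p*h)
  field_simp
  ring

end Identities

noncomputable def glueFn (f g : ℝ → ℝ) (a : ℝ) : ℝ → ℝ := fun x => if x ≤ a then f x else g x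

lemma hasDerivAt_glue {f g₁ g₂ : ℝ → ℝ} {l a r d : ℝ}
    (hl : l < a) (hr : a < r)
    (h₁ : HasDerivAt g₁ d a) (h₂ : HasDerivAt g₂ d a)
    (e₁ : ∀ x ∈ Set.Icc l a, f x = g₁ x) (e₂ : ∀ x ∈ Set.Icc a r, f x = g₂ x) :
    HasDerivAt f d a := by
  have m₁ : Set.Icc l a ∈ nhdsWithin a (Set.Iic a) := by
    rw [← Set.Ici_inter_Iic]
    exact Filter.inter_mem (mem_nhdsWithin_of_mem_nhds (Ici_mem_nhds hl)) self_mem_nhdsWithin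
  have m₂ : Set.Icc a r ∈ nhdsWithin a (Set.Ici a) := by
    rw [← Set.Ici_inter_Iic]
    exact Filter.inter_mem self_mem_nhdsWithin (mem_nhdsWithin_of_mem_nhds (Iic_mem_nhds hr))
  have H₁ : HasDerivWithinAt f d (Set.Iic a) a :=
    ((h₁.hasDerivWithinAt.congr e₁ (e₁ a ⟨le_of_lt hl, le_refl a⟩)).mono_of_mem_nhdsWithin m₁)
  have H₂ : HasDerivWithinAt f d (Set.Ici a) a :=
    ((h₂.hasDerivWithinAt.congr e₂ (e₂ a ⟨le_refl a, le_of_lt hr⟩)).mono_of_mem_nhdsWithin m₂)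
  have H := H₁.union H₂
  rw [Set.Iic_union_Ici] at H
  exact H.hasDerivAt (by simp)

lemma deriv_deriv_knot {φ : ℝ → ℝ} (f g : ℝ → ℝ) {l a r d : ℝ} (hl : l < a) (hr : a < r)
    (Hf : ∀ x ∈ Set.Ioo l a, HasDerivAt φ (f x) x)
    (Ha : HasDerivAt φ (f a) a)
    (Hg : ∀ x ∈ Set.Ioo a r, HasDerivAt φ (g x) x)
    (hfa : f a = g a)
    (hf' : HasDerivAt f d a) (hg' : HasDerivAt g d a) :
    deriv (deriv φ) a = d := by
  have F : ∀ x ∈ Set.Ioo l r, deriv φ x = glueFn f g a x := by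
    intro x hx
    rcases lt_trichotomy x a with hxa | hxa | hxa
    · rw [(Hf x ⟨hx.1, hxa⟩).deriv]
      simp only [glueFn, if_pos hxa.le]
    · subst hxa
      rw [Ha.deriv]
      simp only [glueFn, if_pos le_rfl]
    · rw [(Hg x ⟨hxa, hx.2⟩).deriv]
      simp only [glueFn, if_neg (not_le.mpr hxa)]
  have Ev : deriv φ =ᶠ[nhds a] glueFn f g a :=
    Filter.eventuallyEq_of_mem (Ioo_mem_nhds hl hr) F
  rw [Ev.deriv_eq]
  refine (hasDerivAt_glue hl hr hf' hg' ?_ ?_).deriv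
  · intro x hx
    simp only [glueFn, if_pos hx.2]
  · intro x hx
    by_cases hxa : x ≤ a
    · have hx' : x = a := le_antisymm hxa hx.1
      subst hx'
      simp only [glueFn, if_pos le_rfl, hfa]
    · simp only [glueFn, if_neg hxa]

/-- The main analytic lemma, with abstract knots. -/
lemma main_aux (p h k₀ k₁ k₂ k₃ k₄ : ℝ) (hp : 0 < p) (hh : 0 < h)
    (e1 : k₁ = k₀ + h) (e2 : k₂ = k₁ + h) (e3 : k₃ = k₂ + h) (e4 : k₄ = k₃ + h)
    (φ : ℝ → ℝ)
    (hφ : ∀ x, φ x =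
      if k₀ ≤ x ∧ x ≤ k₁ then P1 p h k₀ x
      else if k₁ ≤ x ∧ x ≤ k₂ then P2 p h k₂ x
      else if k₂ ≤ x ∧ x ≤ k₃ then P3 p h k₂ x
      else if k₃ ≤ x ∧ x ≤ k₄ then P4 p h k₄ x
      else 0) :
    deriv (deriv φ) k₀ = 0 ∧
    deriv (deriv φ) k₁ =
      p ^ 2 * Real.sinh (p * h) / (2 * (p * h * Real.cosh (p * h) - Real.sinh (p * h))) ∧
    deriv (deriv φ) k₂ =
      -(p ^ 2 * Real.sinh (p * h)) / (p * h * Real.cosh (p * h) - Real.sinh (p * h)) ∧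
    deriv (deriv φ) k₃ =
      p ^ 2 * Real.sinh (p * h) / (2 * (p * h * Real.cosh (p * h) - Real.sinh (p * h))) ∧
    deriv (deriv φ) k₄ = 0 := by
  have hk01 : k₀ < k₁ := by linarith
  have hk12 : k₁ < k₂ := by linarith
  have hk23 : k₂ < k₃ := by linarith
  have hk34 : k₃ < k₄ := by linarith
  -- piecewise description
  have E0 : ∀ x ∈ Set.Icc (k₀ - h) k₀, φ x = 0 := by
    intro x hx
    rw [hφ]
    by_cases hx0 : k₀ ≤ x
    · have hx' : x = k₀ := le_antisymm hx.2 hx0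
      rw [if_pos ⟨hx0, by linarith⟩, hx']
      simp [P1]
    · rw [if_neg (fun hc => hx0 hc.1), if_neg (fun hc => hx0 (by linarith [hc.1])),
        if_neg (fun hc => hx0 (by linarith [hc.1])), if_neg (fun hc => hx0 (by linarith [hc.1]))]
  have E1 : ∀ x ∈ Set.Icc k₀ k₁, φ x = P1 p h k₀ x := by
    intro x hx
    rw [hφ, if_pos ⟨hx.1, hx.2⟩]
  have E2 : ∀ x ∈ Set.Icc k₁ k₂, φ x = P2 p h k₂ x := by
    intro x hx
    rw [hφ]
    by_cases hx1 : x ≤ k₁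
    · have hx' : x = k₁ := le_antisymm hx1 hx.1
      rw [if_pos ⟨by linarith, hx1⟩, hx']
      exact id_val1 hp hh (by linarith) (by linarith)
    · rw [if_neg (fun hc => hx1 hc.2), if_pos ⟨hx.1, hx.2⟩]
  have E3 : ∀ x ∈ Set.Icc k₂ k₃, φ x = P3 p h k₂ x := by
    intro x hx
    rw [hφ, if_neg (fun hc => absurd hc.2 (not_le.mpr (by linarith [hx.1])))]
    by_cases hx2 : x ≤ k₂
    · have hx' : x = k₂ := le_antisymm hx2 hx.1
      rw [if_pos ⟨by linarith, hx2⟩, hx']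
      simp [P2, P3]
    · rw [if_neg (fun hc => hx2 hc.2), if_pos ⟨hx.1, hx.2⟩]
  have E4 : ∀ x ∈ Set.Icc k₃ k₄, φ x = P4 p h k₄ x := by
    intro x hx
    rw [hφ, if_neg (fun hc => absurd hc.2 (not_le.mpr (by linarith [hx.1]))),
      if_neg (fun hc => absurd hc.2 (not_le.mpr (by linarith [hx.1])))]
    by_cases hx3 : x ≤ k₃
    · have hx' : x = k₃ := le_antisymm hx3 hx.1
      rw [if_pos ⟨by linarith, hx3⟩, hx']
      exact id_val3 hp hh (by linarith) (by linarith)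
    · rw [if_neg (fun hc => hx3 hc.2), if_pos ⟨hx.1, hx.2⟩]
  have E5 : ∀ x ∈ Set.Icc k₄ (k₄ + h), φ x = 0 := by
    intro x hx
    rw [hφ]
    by_cases hx4 : x ≤ k₄
    · have hx' : x = k₄ := le_antisymm hx4 hx.1
      rw [if_neg (fun hc => absurd hc.1 (not_le.mpr (by linarith [hx.1]))),
        if_neg (fun hc => absurd hc.1 (not_le.mpr (by linarith))),
        if_neg (fun hc => absurd hc.1 (not_le.mpr (by linarith))),
        if_pos ⟨by linarith, hx4⟩, hx']
      simp [P4]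
    · rw [if_neg (fun hc => hx4 (by linarith [hc.2])), if_neg (fun hc => hx4 (by linarith [hc.2])),
        if_neg (fun hc => hx4 (by linarith [hc.2])), if_neg (fun hc => hx4 hc.2)]
  -- derivative on the open pieces
  have D0 : ∀ x ∈ Set.Ioo (k₀ - h) k₀, HasDerivAt φ ((fun _ : ℝ => (0:ℝ)) x) x := by
    intro x hx
    refine (hasDerivAt_const x (0:ℝ)).congr_of_eventuallyEq ?_
    filter_upwards [Ioo_mem_nhds hx.1 hx.2] with y hy using E0 y ⟨hy.1.le, hy.2.le⟩
  have D1 : ∀ x ∈ Set.Ioo k₀ k₁, HasDerivAt φ (P1' p h k₀ x) x := by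
    intro x hx
    refine (hasDerivAt_P1 p h k₀ x hp.ne').congr_of_eventuallyEq ?_
    filter_upwards [Ioo_mem_nhds hx.1 hx.2] with y hy using E1 y ⟨hy.1.le, hy.2.le⟩
  have D2 : ∀ x ∈ Set.Ioo k₁ k₂, HasDerivAt φ (P2' p h k₂ x) x := by
    intro x hx
    refine (hasDerivAt_P2 p h k₂ x).congr_of_eventuallyEq ?_
    filter_upwards [Ioo_mem_nhds hx.1 hx.2] with y hy using E2 y ⟨hy.1.le, hy.2.le⟩
  have D3 : ∀ x ∈ Set.Ioo k₂ k₃, HasDerivAt φ (P3' p h k₂ x) x := by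
    intro x hx
    refine (hasDerivAt_P3 p h k₂ x).congr_of_eventuallyEq ?_
    filter_upwards [Ioo_mem_nhds hx.1 hx.2] with y hy using E3 y ⟨hy.1.le, hy.2.le⟩
  have D4 : ∀ x ∈ Set.Ioo k₃ k₄, HasDerivAt φ (P4' p h k₄ x) x := by
    intro x hx
    refine (hasDerivAt_P4 p h k₄ x hp.ne').congr_of_eventuallyEq ?_
    filter_upwards [Ioo_mem_nhds hx.1 hx.2] with y hy using E4 y ⟨hy.1.le, hy.2.le⟩
  have D5 : ∀ x ∈ Set.Ioo k₄ (k₄ + h), HasDerivAt φ ((fun _ : ℝ => (0:ℝ)) x) x := by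
    intro x hx
    refine (hasDerivAt_const x (0:ℝ)).congr_of_eventuallyEq ?_
    filter_upwards [Ioo_mem_nhds hx.1 hx.2] with y hy using E5 y ⟨hy.1.le, hy.2.le⟩
  -- derivative at the knots
  have G0 : HasDerivAt φ ((fun _ : ℝ => (0:ℝ)) k₀) k₀ :=
    hasDerivAt_glue (by linarith) hk01 (hasDerivAt_const k₀ (0:ℝ))
      (congr_d (hasDerivAt_P1 p h k₀ k₀ hp.ne') (by simp [P1'])) E0 E1
  have G1 : HasDerivAt φ (P1' p h k₀ k₁) k₁ :=
    hasDerivAt_glue hk01 hk12 (hasDerivAt_P1 p h k₀ k₁ hp.ne')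
      (congr_d (hasDerivAt_P2 p h k₂ k₁) (id_der1 hp hh (by linarith) (by linarith))) E1 E2
  have G2 : HasDerivAt φ (P2' p h k₂ k₂) k₂ :=
    hasDerivAt_glue hk12 hk23 (hasDerivAt_P2 p h k₂ k₂)
      (congr_d (hasDerivAt_P3 p h k₂ k₂) (id_der2 hp hh).symm) E2 E3
  have G3 : HasDerivAt φ (P3' p h k₂ k₃) k₃ :=
    hasDerivAt_glue hk23 hk34 (hasDerivAt_P3 p h k₂ k₃)
      (congr_d (hasDerivAt_P4 p h k₄ k₃ hp.ne')
        (id_der3 hp hh (by linarith) (by linarith)).symm) E3 E4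
  have G4 : HasDerivAt φ (P4' p h k₄ k₄) k₄ :=
    hasDerivAt_glue hk34 (by linarith) (hasDerivAt_P4 p h k₄ k₄ hp.ne')
      (congr_d (hasDerivAt_const k₄ (0:ℝ)) (by simp [P4'])) E4 E5
  refine ⟨?_, ?_, ?_, ?_, ?_⟩
  · exact deriv_deriv_knot (fun _ : ℝ => (0:ℝ)) (P1' p h k₀) (by linarith : k₀ - h < k₀) hk01
      D0 G0 D1 (by simp [P1']) (hasDerivAt_const k₀ (0:ℝ))
      (congr_d (hasDerivAt_P1' p h k₀ k₀) (by simp))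
  · exact deriv_deriv_knot (P1' p h k₀) (P2' p h k₂) hk01 hk12 D1 G1 D2
      (id_der1 hp hh (by linarith) (by linarith)).symm
      (congr_d (hasDerivAt_P1' p h k₀ k₁) (id_sd_sinh hp hh (by linarith)))
      (congr_d (hasDerivAt_P2' p h k₂ k₁) (id_sd_exp1 hp hh (by linarith)))
  · exact deriv_deriv_knot (P2' p h k₂) (P3' p h k₂) hk12 hk23 D2 G2 D3
      (id_der2 hp hh)
      (congr_d (hasDerivAt_P2' p h k₂ k₂) (id_sd_exp0 hp hh (by ring)))
      (congr_d (hasDerivAt_P3' p h k₂ k₂) (id_sd_exp0 hp hh (by ring)))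
  · refine deriv_deriv_knot (P3' p h k₂) (P4' p h k₄) hk23 hk34 D3 ?_ D4
      (id_der3 hp hh (by linarith) (by linarith))
      (congr_d (hasDerivAt_P3' p h k₂ k₃) (id_sd_exp1 hp hh (by linarith)))
      (congr_d (hasDerivAt_P4' p h k₄ k₃) (id_sd_sinh hp hh (by linarith)))
    exact G3
  · exact deriv_deriv_knot (P4' p h k₄) (fun _ : ℝ => (0:ℝ)) hk34 (by linarith) D4 G4 D5
      (by simp [P4'])
      (congr_d (hasDerivAt_P4' p h k₄ k₄) (by simp))
      (hasDerivAt_const k₄ (0:ℝ))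

end EBaux





lemma expBspline_eq (p h x₀ : ℝ) (i : ℤ) (x : ℝ) :
    expBspline p h x₀ i x =
      if x₀ + ((i:ℝ) - 2) * h ≤ x ∧ x ≤ x₀ + ((i:ℝ) - 1) * h then
        EBaux.P1 p h (x₀ + ((i:ℝ) - 2) * h) x
      else if x₀ + ((i:ℝ) - 1) * h ≤ x ∧ x ≤ x₀ + (i:ℝ) * h then
        EBaux.P2 p h (x₀ + (i:ℝ) * h) x
      else if x₀ + (i:ℝ) * h ≤ x ∧ x ≤ x₀ + ((i:ℝ) + 1) * h then
        EBaux.P3 p h (x₀ + (i:ℝ) * h) x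
      else if x₀ + ((i:ℝ) + 1) * h ≤ x ∧ x ≤ x₀ + ((i:ℝ) + 2) * h then
        EBaux.P4 p h (x₀ + ((i:ℝ) + 2) * h) x
      else 0 := by
  simp only [expBspline, EBaux.P1, EBaux.P2, EBaux.P3, EBaux.P4, EBaux.cA, EBaux.cB1,
    EBaux.cB2, EBaux.cC1, EBaux.cD1]
  push_cast
  rfl

/-- Values of the second derivative of the exponential B-spline `φ_i` at the knots:
`φ_i″(x_{i−2}) = 0`, `φ_i″(x_{i±1}) = p²s/(2(phc−s))`, `φ_i″(x_i) = −p²s/(phc−s)`,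
`φ_i″(x_{i+2}) = 0`. -/
theorem expBspline_second_deriv_values_at_knots (p h x₀ : ℝ) (hp : 0 < p) (hh : 0 < h)
    (i : ℤ) (s c : ℝ) (hs : s = Real.sinh (p * h)) (hc : c = Real.cosh (p * h)) :
    deriv (deriv (expBspline p h x₀ i)) (x₀ + ((i : ℝ) - 2) * h) = 0 ∧
    deriv (deriv (expBspline p h x₀ i)) (x₀ + ((i : ℝ) - 1) * h) =
      p ^ 2 * s / (2 * (p * h * c - s)) ∧
    deriv (deriv (expBspline p h x₀ i)) (x₀ + (i : ℝ) * h) =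
      -(p ^ 2 * s) / (p * h * c - s) ∧
    deriv (deriv (expBspline p h x₀ i)) (x₀ + ((i : ℝ) + 1) * h) =
      p ^ 2 * s / (2 * (p * h * c - s)) ∧
    deriv (deriv (expBspline p h x₀ i)) (x₀ + ((i : ℝ) + 2) * h) = 0 := by
  subst hs
  subst hc
  exact EBaux.main_aux p h (x₀ + ((i:ℝ) - 2) * h) (x₀ + ((i:ℝ) - 1) * h) (x₀ + (i:ℝ) * h)
    (x₀ + ((i:ℝ) + 1) * h) (x₀ + ((i:ℝ) + 2) * h) hp hh (by ring) (by ring) (by ring) (by ring)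
    (expBspline p h x₀ i) (expBspline_eq p h x₀ i)
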